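/- arXiv:1506.03364 — 2 statements merged into one kernel-verified Lean document; each statement's English description precedes it below -/
import Mathlib

section
/- Let κ be an uncountable cardinal with κ = κ^{<κ}. If A ⊆ κ^κ is contained in a K_κ subset of κ^κ, then A is eventually bounded. -/
open Cardinal Set Topology

universe u

/-- The bounded topology on `K → Y`: basic open sets are determined by an
initial segment of values. -/
def bTop (K : Type u) [LinearOrder K] (Y : Type u) : TopologicalSpace (K → Y) :=
  TopologicalSpace.generateFrom
    {U | ∃ (b : K) (s : K → Y), U = {x | ∀ i, i < b → x i = s i}}

/-- `A` is κ-compact: every open cover (for the bounded topology) has a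
subcover of size `< #K`. -/
def KCompact (K : Type u) [LinearOrder K] {Y : Type u} (A : Set (K → Y)) : Prop :=
  ∀ 𝒰 : Set (Set (K → Y)), (∀ U ∈ 𝒰, IsOpen[bTop K Y] U) → A ⊆ ⋃₀ 𝒰 →
    ∃ 𝒱 ⊆ 𝒰, #𝒱 < #K ∧ A ⊆ ⋃₀ 𝒱

/-- `B` is a `K_κ` subset: a union of κ-many κ-compact sets. -/
def IsKK (K : Type u) [LinearOrder K] (B : Set (K → K)) : Prop :=
  ∃ C : K → Set (K → K), (∀ b, KCompact K (C b)) ∧ B = ⋃ b, C b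

/-- Nodes of the tree `Y^{<K}`: sequences of length `b`, for `b : K`. -/
abbrev Nd (K : Type u) [LinearOrder K] (Y : Type u) := Σ b : K, (Set.Iio b → Y)

/-- Restriction of a node to a smaller length. -/
def ndRes (K : Type u) [LinearOrder K] {Y : Type u} (p : Nd K Y) (c : K) (h : c ≤ p.1) :
    Nd K Y :=
  ⟨c, fun i => p.2 ⟨i.1, lt_of_lt_of_le i.2 h⟩⟩

/-- Restriction of a branch `x : K → Y` to length `b`. -/
def xRes (K : Type u) [LinearOrder K] {Y : Type u} (x : K → Y) (b : K) : Nd K Y :=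
  ⟨b, fun i => x i.1⟩

/-- `q` extends `p` as a sequence. -/
def NdExt (K : Type u) [LinearOrder K] {Y : Type u} (q p : Nd K Y) : Prop :=
  ∃ h : p.1 ≤ q.1, ∀ i : Set.Iio p.1, q.2 ⟨i.1, lt_of_lt_of_le i.2 h⟩ = p.2 i

/-- A subtree of `Y^{<K}`: a set of nodes closed under restriction. -/
def IsSubtree (K : Type u) [LinearOrder K] {Y : Type u} (T : Set (Nd K Y)) : Prop :=
  ∀ p ∈ T, ∀ c, ∀ h : c ≤ p.1, ndRes K p c h ∈ T

/-- The body `[T]`: the set of `K`-branches through `T`. -/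
def body (K : Type u) [LinearOrder K] {Y : Type u} (T : Set (Nd K Y)) : Set (K → Y) :=
  {x | ∀ b : K, xRes K x b ∈ T}

/-- `T` is pruned: every node is extended by a branch. -/
def Pruned (K : Type u) [LinearOrder K] {Y : Type u} (T : Set (Nd K Y)) : Prop :=
  ∀ p ∈ T, ∃ x ∈ body K T, NdExt K (xRes K x p.1) p

/-- `b` is a limit element: not least, and with no immediate predecessor. -/
def IsLimElt (K : Type u) [LinearOrder K] (b : K) : Prop :=
  (∃ c, c < b) ∧ ∀ c, c < b → ∃ d, c < d ∧ d < b

/-- Superclosed: closed under unions of increasing sequences of length `< K`. -/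
def Superclosed (K : Type u) [LinearOrder K] {Y : Type u} (T : Set (Nd K Y)) : Prop :=
  ∀ p : Nd K Y, IsLimElt K p.1 → (∀ c, ∀ h : c < p.1, ndRes K p c h.le ∈ T) → p ∈ T

/-- The values at position `p.1` realized by extensions of `p` in `T`, i.e. the
immediate successors of `p` in `T`. -/
def splitVals (K : Type u) [LinearOrder K] {Y : Type u} (T : Set (Nd K Y)) (p : Nd K Y) :
    Set Y :=
  {a | ∃ q ∈ T, ∃ h : p.1 < q.1,
    (∀ i : Set.Iio p.1, q.2 ⟨i.1, i.2.trans h⟩ = p.2 i) ∧ q.2 ⟨p.1, h⟩ = a}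

/-- A perfect tree: a nonempty superclosed subtree in which every node is
extended by a 2-splitting node. -/
def PerfectTree (K : Type u) [LinearOrder K] (T : Set (Nd K K)) : Prop :=
  T.Nonempty ∧ IsSubtree K T ∧ Superclosed K T ∧
    ∀ p ∈ T, ∃ q ∈ T, NdExt K q p ∧
      ∃ a ∈ splitVals K T q, ∃ a' ∈ splitVals K T q, a ≠ a'

/-- A κ-Miller tree: a nonempty superclosed subtree in which every node is
extended by a κ-splitting node. -/
def MillerTree (K : Type u) [LinearOrder K] (T : Set (Nd K K)) : Prop :=
  T.Nonempty ∧ IsSubtree K T ∧ Superclosed K T ∧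
    ∀ p ∈ T, ∃ q ∈ T, NdExt K q p ∧ #K ≤ #(splitVals K T q)

/-- A κ-tree: a subtree of height `K` all of whose levels have size `< #K`. -/
def KTree (K : Type u) [LinearOrder K] {Y : Type u} (T : Set (Nd K Y)) : Prop :=
  (∀ b : K, ∃ t : Set.Iio b → Y, (⟨b, t⟩ : Nd K Y) ∈ T) ∧
    ∀ b : K, #{t : Set.Iio b → Y | (⟨b, t⟩ : Nd K Y) ∈ T} < #K

/-- A κ-Aronszajn tree: a κ-tree with no branch. -/
def Aronszajn (K : Type u) [LinearOrder K] (S : Set (Nd K K)) : Prop :=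
  IsSubtree K S ∧ KTree K S ∧ body K S = ∅

/-- The tree property for `K`: every κ-tree has a branch. -/
def TreeProp (K : Type u) [LinearOrder K] : Prop :=
  ∀ T : Set (Nd K K), IsSubtree K T → KTree K T → (body K T).Nonempty

/-- weak compactness: inaccessibility together with the tree property. -/
def WComp (K : Type u) [LinearOrder K] : Prop :=
  (#K).IsInaccessible ∧ TreeProp K

/-- `C` is homeomorphic to the generalized Baire space `K → K`. -/
def HomeoToBaire (K : Type u) [LinearOrder K] (C : Set (K → K)) : Prop :=
  letI := bTop K K
  Nonempty (↥C ≃ₜ (K → K))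

/-- `C` is homeomorphic to the generalized Cantor space `K → ULift.{u} Bool`. -/
def HomeoToCantor (K : Type u) [LinearOrder K] (C : Set (K → K)) : Prop :=
  letI := bTop K K
  letI : TopologicalSpace (K → ULift.{u} Bool) := bTop K (ULift.{u} Bool)
  Nonempty (↥C ≃ₜ (K → ULift.{u} Bool))

/-- The Hurewicz dichotomy for `A`. -/
def HD (K : Type u) [LinearOrder K] (A : Set (K → K)) : Prop :=
  (∃ B, IsKK K B ∧ A ⊆ B) ∨
    ∃ C ⊆ A, IsClosed[bTop K K] C ∧ HomeoToBaire K C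

/-- The Miller-tree Hurewicz dichotomy for `A`. -/
def MillerHD (K : Type u) [LinearOrder K] (A : Set (K → K)) : Prop :=
  (∃ B, IsKK K B ∧ A ⊆ B) ∨ ∃ T, MillerTree K T ∧ body K T ⊆ A

/-- Σ¹₁ subsets of `K → K`: projections of closed subsets of the product. -/
def Sigma11 (K : Type u) [LinearOrder K] (A : Set (K → K)) : Prop :=
  letI := bTop K K
  ∃ C : Set ((K → K) × (K → K)), IsClosed C ∧ A = Prod.fst '' C

/-- The κ-perfect set property. -/
def PSP (K : Type u) [LinearOrder K] (A : Set (K → K)) : Prop :=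
  #A ≤ #K ∨ ∃ C ⊆ A, IsClosed[bTop K K] C ∧ HomeoToCantor K C

/-- `A ⊆ K → K` is bounded. -/
def BddSet (K : Type u) [LinearOrder K] (A : Set (K → K)) : Prop :=
  ∃ x : K → K, ∀ y ∈ A, ∀ i, y i ≤ x i

/-- `A ⊆ K → K` is eventually bounded. -/
def EvBddSet (K : Type u) [LinearOrder K] (A : Set (K → K)) : Prop :=
  ∃ x : K → K, ∀ y ∈ A, ∃ b : K, ∀ i, b ≤ i → y i ≤ x i

/-- Nodes of the product tree `K^{<K} × K^{<K}` (pairs of equal length). -/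
abbrev PNd (K : Type u) [LinearOrder K] := Σ b : K, (Set.Iio b → K) × (Set.Iio b → K)

/-- Subtree of the product tree: closed under simultaneous restriction. -/
def IsPSubtree (K : Type u) [LinearOrder K] (T : Set (PNd K)) : Prop :=
  ∀ p ∈ T, ∀ c, ∀ h : c ≤ p.1,
    (⟨c, fun i => p.2.1 ⟨i.1, lt_of_lt_of_le i.2 h⟩,
        fun i => p.2.2 ⟨i.1, lt_of_lt_of_le i.2 h⟩⟩ : PNd K) ∈ T

/-- The projection `p[T]` of the set of branches of a product tree to the first
coordinate. -/
def pProj (K : Type u) [LinearOrder K] (T : Set (PNd K)) : Set (K → K) :=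
  {x | ∃ y : K → K, ∀ b : K,
    (⟨b, fun i => x i.1, fun i => y i.1⟩ : PNd K) ∈ T}

/-- An `∃^x`-perfect embedding into a product tree `T`. -/
def PerfEmb (K : Type u) [LinearOrder K] (T : Set (PNd K)) (e : Nd K (ULift.{u} Bool) → PNd K) : Prop :=
  (∀ u, e u ∈ T) ∧
  (∀ u u' : Nd K (ULift.{u} Bool), ∀ h : u.1 < u'.1,
     (∀ i : Set.Iio u.1, u'.2 ⟨i.1, i.2.trans h⟩ = u.2 i) →
     ∃ h' : (e u).1 < (e u').1,
       (∀ i : Set.Iio (e u).1, (e u').2.1 ⟨i.1, i.2.trans h'⟩ = (e u).2.1 i) ∧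
       (∀ i : Set.Iio (e u).1, (e u').2.2 ⟨i.1, i.2.trans h'⟩ = (e u).2.2 i)) ∧
  (∀ u u' : Nd K (ULift.{u} Bool), ¬ NdExt K u u' → ¬ NdExt K u' u →
     ¬ NdExt K ⟨(e u).1, (e u).2.1⟩ ⟨(e u').1, (e u').2.1⟩ ∧
     ¬ NdExt K ⟨(e u').1, (e u').2.1⟩ ⟨(e u).1, (e u).2.1⟩) ∧
  (∀ u : Nd K (ULift.{u} Bool), IsLimElt K u.1 → ∀ d, d < (e u).1 →
     ∃ c, ∃ h : c < u.1, d < (e (ndRes K u c h.le)).1)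

/-- The immediate extension `u⌢⟨a⟩` of a node `u` by a value `a`. -/
def extNd (K : Type u) [LinearOrder K] [SuccOrder K] (u : Nd K K) (a : K) : Nd K K :=
  ⟨Order.succ u.1, fun i => if h : i.1 < u.1 then u.2 ⟨i.1, h⟩ else a⟩

/-- An `∃^x`-superperfect embedding into a product tree `T`. -/
def SuperPerfEmb (K : Type u) [LinearOrder K] [SuccOrder K] (T : Set (PNd K))
    (e : Nd K K → PNd K) : Prop :=
  (∀ u, e u ∈ T) ∧
  (∀ u u' : Nd K K, ∀ h : u.1 < u'.1,
     (∀ i : Set.Iio u.1, u'.2 ⟨i.1, i.2.trans h⟩ = u.2 i) →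
     ∃ h' : (e u).1 < (e u').1,
       (∀ i : Set.Iio (e u).1, (e u').2.1 ⟨i.1, i.2.trans h'⟩ = (e u).2.1 i) ∧
       (∀ i : Set.Iio (e u).1, (e u').2.2 ⟨i.1, i.2.trans h'⟩ = (e u).2.2 i)) ∧
  (∀ u : Nd K K, IsLimElt K u.1 → ∀ d, d < (e u).1 →
     ∃ c, ∃ h : c < u.1, d < (e (ndRes K u c h.le)).1) ∧
  (∀ u : Nd K K, ∃ γ : K, (e u).1 ≤ γ ∧
     ∃ hlen : ∀ a : K, γ < (e (extNd K u a)).1,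
       ∀ a b : K, a ≠ b →
         (∀ i : Set.Iio γ,
           (e (extNd K u a)).2.1 ⟨i.1, i.2.trans (hlen a)⟩ =
           (e (extNd K u b)).2.1 ⟨i.1, i.2.trans (hlen b)⟩) ∧
         (e (extNd K u a)).2.1 ⟨γ, hlen a⟩ ≠ (e (extNd K u b)).2.1 ⟨γ, hlen b⟩)

/-!
Covering a `κ`-compact set by the basic open sets that fix the values below some `c > i`
shows that its members take fewer than `κ` values at `i`. Since `κ^{<κ} = κ` forces `κ` to be
regular (König), such sets of values are bounded, so every `κ`-compact set is bounded
pointwise, say by `x_b`. The diagonal bound `x i = sup_{b ≤ i} x_b i` is again a supremum of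
fewer than `κ` values, and it eventually dominates every `x_b`.
-/

theorem bddAbove_of_mk_lt_cof {α : Type u} [LinearOrder α] {s : Set α} (hs : #s < Order.cof α) :
    BddAbove s :=
  BddAbove.of_not_isCofinal fun h => (Order.cof_le h).not_gt hs

theorem Cardinal.isRegular_of_powerlt_self {c : Cardinal} (hc : ℵ₀ ≤ c) (hpow : c ^< c = c) :
    c.IsRegular :=
  ⟨hc, le_of_not_gt fun hcof =>
    (lt_power_cof_ord hc).not_ge ((le_powerlt c hcof).trans_eq hpow)⟩

section

variable {K : Type u} [LinearOrder K]

theorem le_cof_of_mk_Iio_lt (hreg : (#K).IsRegular) (hseg : ∀ b : K, #(Iio b) < #K) :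
    #K ≤ Order.cof K := by
  refine Order.le_cof_iff.2 fun s hs => le_of_not_gt fun hlt => ?_
  have hIic : ∀ a : s, #(Iic (a : K)) < #K := fun a => by
    rw [← Iio_insert]
    exact mk_insert_le.trans_lt
      (add_lt_of_lt hreg.aleph0_le (hseg a) (one_lt_aleph0.trans_le hreg.aleph0_le))
  have hcover : ⋃ a : s, Iic (a : K) = Set.univ := by
    rw [iUnion_coe_set]
    exact isCofinal_iff_iUnion_Iic_eq_univ.1 hs
  have := (card_iUnion_lt_iff_forall_of_isRegular hreg hlt).2 hIic
  rw [hcover, mk_univ] at this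
  exact this.false

theorem isOpen_bTop_cylinder {Y : Type u} (b : K) (s : K → Y) :
    IsOpen[bTop K Y] {x | ∀ i, i < b → x i = s i} :=
  TopologicalSpace.isOpen_generateFrom_of_mem ⟨b, s, rfl⟩

theorem KCompact.mk_image_eval_lt {Y : Type u} {C : Set (K → Y)} (hC : KCompact K C)
    {i c : K} (hic : i < c) : #(Function.eval i '' C) < #K := by
  obtain ⟨𝒱, h𝒱, hcard, hcover⟩ :=
    hC (range fun s : K → Y => {x | ∀ j, j < c → x j = s j})
      (forall_mem_range.2 fun s => isOpen_bTop_cylinder c s)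
      (fun y _ => mem_sUnion.2 ⟨_, mem_range_self y, fun _ _ => rfl⟩)
  choose s hs using fun V : 𝒱 => h𝒱 V.2
  have hsub : Function.eval i '' C ⊆ range fun V : 𝒱 => s V i := by
    rintro _ ⟨y, hy, rfl⟩
    obtain ⟨V, hV, hyV⟩ := hcover hy
    have hyV_eq : ∀ j, j < c → y j = s ⟨V, hV⟩ j := (Set.ext_iff.1 (hs ⟨V, hV⟩) y).2 hyV
    exact ⟨⟨V, hV⟩, (hyV_eq i hic).symm⟩
  exact ((mk_le_mk_of_subset hsub).trans mk_range_le).trans_lt hcard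

theorem KCompact.bddAbove (hcof : #K ≤ Order.cof K) {C : Set (K → K)} (hC : KCompact K C) :
    BddAbove C := by
  refine bddAbove_pi.2 fun i => ?_
  by_cases hi : IsMax i
  · exact ⟨i, forall_mem_image.2 fun y _ => le_of_not_gt hi.not_lt⟩
  · obtain ⟨c, hic⟩ := not_isMax_iff.1 hi
    exact bddAbove_of_mk_lt_cof ((hC.mk_image_eval_lt hic).trans_le hcof)

theorem evBddSet_range (hcof : #K ≤ Order.cof K) (hseg : ∀ b : K, #(Iio b) < #K)
    (f : K → K → K) : EvBddSet K (range f) := by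
  have hdiag : ∀ i, BddAbove ((fun b => f b i) '' Iic i) := fun i => by
    rw [← Iio_insert, image_insert_eq]
    exact (bddAbove_of_mk_lt_cof (mk_image_le.trans_lt ((hseg i).trans_le hcof))).insert _
  choose x hx using hdiag
  exact ⟨x, forall_mem_range.2 fun b => ⟨b, fun i hbi => hx i ⟨b, hbi, rfl⟩⟩⟩

theorem EvBddSet.of_forall_le {A B : Set (K → K)} (hB : EvBddSet K B)
    (hAB : ∀ y ∈ A, ∃ z ∈ B, y ≤ z) : EvBddSet K A := by
  obtain ⟨x, hx⟩ := hB
  refine ⟨x, fun y hy => ?_⟩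
  obtain ⟨z, hz, hyz⟩ := hAB y hy
  obtain ⟨b, hb⟩ := hx z hz
  exact ⟨b, fun i hbi => (hyz i).trans (hb i hbi)⟩

end

theorem eventuallyBounded_of_subset_KK_general (K : Type u) [LinearOrder K]
    (hseg : ∀ b : K, #(Set.Iio b) < #K)
    (hunc : ℵ₀ < #K) (hpow : Cardinal.powerlt #K #K = #K)
    (A B : Set (K → K)) (hB : IsKK K B) (hAB : A ⊆ B) :
    EvBddSet K A := by
  obtain ⟨C, hC, rfl⟩ := hB
  have hcof : #K ≤ Order.cof K :=
    le_cof_of_mk_Iio_lt (isRegular_of_powerlt_self hunc.le hpow) hseg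
  choose f hf using fun b => (hC b).bddAbove hcof
  refine (evBddSet_range hcof hseg f).of_forall_le fun y hy => ?_
  obtain ⟨b, hb⟩ := mem_iUnion.1 (hAB hy)
  exact ⟨f b, mem_range_self b, hf b hb⟩

/-- A subset of a `K_κ` subset of `K → K` is eventually bounded. -/
theorem eventuallyBounded_of_subset_KK (K : Type u) [LinearOrder K] [WellFoundedLT K]
    (hseg : ∀ b : K, #(Set.Iio b) < #K)
    (hunc : ℵ₀ < #K) (hpow : Cardinal.powerlt #K #K = #K)
    (A B : Set (K → K)) (hB : IsKK K B) (hAB : A ⊆ B) :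
    EvBddSet K A :=
  eventuallyBounded_of_subset_KK_general K hseg hunc hpow A B hB hAB
end

section
/- Let κ be a weakly compact cardinal. A subset A of κ^κ is contained in a κ-compact subset of κ^κ if and only if A is bounded, and A is contained in a K_κ subset of κ^κ if and only if A is eventually bounded. -/
open Cardinal Set Topology

universe u

/-!
Bounded sets lie in boxes `Iic g`, and boxes are κ-compact: if an open cover of `Iic g` had no
subcover of size `< κ`, the nodes `p ≤ g` whose cone has no small subcover would form a κ-tree
(levels are small because κ is a strong limit, and nonempty because κ is regular), and a branch
through it would lie in a member of the cover together with one of its cones. Conversely,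
covering a κ-compact set by the open sets `{z | z i < c}` and using regularity bounds it.
For `K_κ` sets, bounding the first `i` compact pieces at coordinate `i` gives an eventual bound;
a set eventually bounded by `x` lies in the union of the boxes below `max m x`, `m : K`.
-/

theorem Cardinal.IsStrongLimit.power_lt {c a b : Cardinal} (hc : c.IsStrongLimit)
    (ha : a < c) (hb : b < c) : a ^ b < c :=
  calc a ^ b ≤ (2 ^ a) ^ b := power_le_power_right (cantor a).le
    _ = 2 ^ (a * b) := by rw [← power_mul]
    _ < c := hc.isStrongPrelimit (mul_lt_of_lt hc.aleph0_le ha hb)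

section Cardinality

variable {K : Type u} [LinearOrder K]

theorem mk_Iic_lt_of_mk_Iio_lt (hseg : ∀ b : K, #(Iio b) < #K) (hK : ℵ₀ ≤ #K) (b : K) :
    #(Iic b) < #K := by
  rw [← Iio_insert]
  exact mk_insert_le.trans_lt (add_lt_of_lt hK (hseg b) (one_lt_aleph0.trans_le hK))

theorem noMaxOrder_of_mk_Iio_lt (hseg : ∀ b : K, #(Iio b) < #K) (hK : ℵ₀ ≤ #K) :
    NoMaxOrder K := by
  refine ⟨fun b => ?_⟩
  by_contra! h
  have hlt := mk_Iic_lt_of_mk_Iio_lt hseg hK b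
  rw [show Iic b = Set.univ from eq_univ_of_forall h, mk_univ] at hlt
  exact hlt.false

theorem bddAbove_of_mk_lt (hseg : ∀ b : K, #(Iio b) < #K) (hreg : (#K).IsRegular) {S : Set K}
    (hS : #S < #K) : BddAbove S := by
  by_contra h
  rw [not_bddAbove_iff] at h
  have hcover : ⋃ c : S, Iio c.1 = Set.univ := eq_univ_of_forall fun b => by
    obtain ⟨c, hc, hbc⟩ := h b
    exact mem_iUnion.2 ⟨⟨c, hc⟩, hbc⟩
  have hlt := (card_iUnion_lt_iff_forall_of_isRegular hreg hS).2 fun c => hseg c.1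
  rw [hcover, mk_univ] at hlt
  exact hlt.false

theorem mk_Iic_fun_lt (hseg : ∀ b : K, #(Iio b) < #K) (hK : (#K).IsInaccessible) {ι : Type u}
    (hι : #ι < #K) (f : ι → K) : #(Iic f) < #K := by
  obtain ⟨m, hm⟩ := bddAbove_of_mk_lt hseg hK.isRegular (mk_range_le.trans_lt hι)
  have hinj : Function.Injective fun (t : Iic f) i =>
      (⟨t.1 i, (t.2 i).trans (hm ⟨i, rfl⟩)⟩ : Iic m) :=
    fun t t' h => Subtype.ext <| funext fun i => congrArg Subtype.val (congrFun h i)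
  refine (mk_le_of_injective hinj).trans_lt ?_
  rw [← power_def]
  exact hK.isStrongLimit.power_lt (mk_Iic_lt_of_mk_Iio_lt hseg hK.aleph0_lt.le m) hι

end Cardinality

section BoundedTopology

variable {K Y : Type u} [LinearOrder K]

theorem isOpen_of_forall_agree_below {U : Set (K → Y)} (b : K)
    (hU : ∀ x ∈ U, ∀ y : K → Y, (∀ i, i < b → y i = x i) → y ∈ U) :
    IsOpen[bTop K Y] U := by
  let _ := bTop K Y
  have hunion : U = ⋃ x ∈ U, {y | ∀ i, i < b → y i = x i} :=
    Subset.antisymm (fun x hx => mem_biUnion hx fun _ _ => rfl)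
      (iUnion₂_subset fun x hx y hy => hU x hx y hy)
  rw [hunion]
  exact isOpen_biUnion fun x _ => TopologicalSpace.isOpen_generateFrom_of_mem ⟨b, x, rfl⟩

theorem exists_agree_below_subset_of_isOpen [Nonempty K] {U : Set (K → Y)}
    (hU : IsOpen[bTop K Y] U) {y : K → Y} (hy : y ∈ U) :
    ∃ b : K, {z | ∀ i, i < b → z i = y i} ⊆ U := by
  induction hU generalizing y with
  | basic V hV =>
    obtain ⟨b, s, rfl⟩ := hV
    exact ⟨b, fun z hz i hi => (hz i hi).trans (hy i hi)⟩
  | univ => exact ⟨Classical.arbitrary K, subset_univ _⟩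
  | inter U V _ _ ihU ihV =>
    obtain ⟨b₁, h₁⟩ := ihU hy.1
    obtain ⟨b₂, h₂⟩ := ihV hy.2
    exact ⟨max b₁ b₂, fun z hz =>
      ⟨h₁ fun i hi => hz i (hi.trans_le (le_max_left _ _)),
       h₂ fun i hi => hz i (hi.trans_le (le_max_right _ _))⟩⟩
  | sUnion S _ ih =>
    obtain ⟨V, hV, hyV⟩ := hy
    obtain ⟨b, hb⟩ := ih V hV hyV
    exact ⟨b, fun z hz => ⟨V, hV, hb hz⟩⟩

end BoundedTopology

section KCompact

variable {K Y : Type u} [LinearOrder K]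

def HasSmallSubcover (K : Type u) [LinearOrder K] {Y : Type u} (𝒰 : Set (Set (K → Y)))
    (S : Set (K → Y)) : Prop :=
  ∃ 𝒱 ⊆ 𝒰, #𝒱 < #K ∧ S ⊆ ⋃₀ 𝒱

theorem HasSmallSubcover.mono {𝒰 : Set (Set (K → Y))} {S S' : Set (K → Y)}
    (h : HasSmallSubcover K 𝒰 S) (hS' : S' ⊆ S) : HasSmallSubcover K 𝒰 S' :=
  let ⟨𝒱, h𝒱, hcard, hcov⟩ := h
  ⟨𝒱, h𝒱, hcard, hS'.trans hcov⟩

theorem hasSmallSubcover_iUnion (hreg : (#K).IsRegular) {𝒰 : Set (Set (K → Y))} {ι : Type u}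
    (hι : #ι < #K) {S : ι → Set (K → Y)} (h : ∀ i, HasSmallSubcover K 𝒰 (S i)) :
    HasSmallSubcover K 𝒰 (⋃ i, S i) := by
  choose 𝒱 h𝒱 hcard hcov using h
  exact ⟨⋃ i, 𝒱 i, iUnion_subset h𝒱,
    (card_iUnion_lt_iff_forall_of_isRegular hreg hι).2 hcard,
    iUnion_subset fun i => (hcov i).trans (sUnion_mono (subset_iUnion 𝒱 i))⟩

theorem KCompact.exists_small_index {B : Set (K → Y)} (hB : KCompact K B) {ι : Type u}
    (U : ι → Set (K → Y)) (hU : ∀ i, IsOpen[bTop K Y] (U i)) (hcov : B ⊆ ⋃ i, U i) :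
    ∃ s : Set ι, #s < #K ∧ B ⊆ ⋃ i ∈ s, U i := by
  obtain ⟨𝒱, h𝒱, hcard, hB𝒱⟩ :=
    hB (range U) (forall_mem_range.2 hU) (by rwa [sUnion_range])
  choose j hj using fun V : 𝒱 => h𝒱 V.2
  refine ⟨range j, mk_range_le.trans_lt hcard, fun y hy => ?_⟩
  obtain ⟨V, hV, hyV⟩ := hB𝒱 hy
  exact mem_biUnion ⟨⟨V, hV⟩, rfl⟩ (by rwa [hj ⟨V, hV⟩])

theorem bddAbove_of_kCompact (hseg : ∀ b : K, #(Iio b) < #K) (hreg : (#K).IsRegular)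
    {B : Set (K → K)} (hB : KCompact K B) : BddAbove B := by
  have := noMaxOrder_of_mk_Iio_lt hseg hreg.aleph0_le
  refine bddAbove_pi.2 fun i => ?_
  have hopen (c : K) : IsOpen[bTop K K] {z : K → K | z i < c} :=
    let ⟨b, hib⟩ := exists_gt i
    isOpen_of_forall_agree_below b fun x hx y hy => show y i < c by rwa [hy i hib]
  obtain ⟨s, hs, hBs⟩ :=
    hB.exists_small_index _ hopen fun y _ => mem_iUnion.2 (exists_gt (y i))
  obtain ⟨m, hm⟩ := bddAbove_of_mk_lt hseg hreg hs
  refine ⟨m, ?_⟩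
  rintro _ ⟨y, hy, rfl⟩
  obtain ⟨c, hc, hyc⟩ := mem_iUnion₂.1 (hBs hy)
  exact (le_of_lt hyc).trans (hm hc)

end KCompact

section Box

variable {K : Type u} [LinearOrder K]

def nodeCyl {Y : Type u} (p : Nd K Y) : Set (K → Y) :=
  {y | ∀ i : Iio p.1, y i = p.2 i}

def uncoveredNodes (𝒰 : Set (Set (K → K))) (g : K → K) : Set (Nd K K) :=
  {p | (p.2 ≤ fun i => g i.1) ∧ ¬ HasSmallSubcover K 𝒰 (Iic g ∩ nodeCyl p)}

theorem uncoveredNodes_isSubtree (𝒰 : Set (Set (K → K))) (g : K → K) :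
    IsSubtree K (uncoveredNodes 𝒰 g) := by
  rintro p ⟨hpg, hp⟩ c hc
  exact ⟨fun i => hpg _, fun h => hp (h.mono (inter_subset_inter_right _
    fun y hy i => hy ⟨i.1, i.2.trans_le hc⟩))⟩

theorem uncoveredNodes_kTree (hseg : ∀ b : K, #(Iio b) < #K) (hK : (#K).IsInaccessible)
    {𝒰 : Set (Set (K → K))} {g : K → K} (h : ¬ HasSmallSubcover K 𝒰 (Iic g)) :
    KTree K (uncoveredNodes 𝒰 g) := by
  have hsmall (b : K) : #(Iic fun i : Iio b => g i) < #K := mk_Iic_fun_lt hseg hK (hseg b) _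
  have hlevel (b : K) :
      {t | (⟨b, t⟩ : Nd K K) ∈ uncoveredNodes 𝒰 g} ⊆ Iic fun i => g i :=
    fun _ ht => ht.1
  refine ⟨fun b => ?_, fun b => (mk_le_mk_of_subset (hlevel b)).trans_lt (hsmall b)⟩
  by_contra! hb
  have hcovered (t : Iic fun i : Iio b => g i) :
      HasSmallSubcover K 𝒰 (Iic g ∩ nodeCyl ⟨b, t⟩) :=
    not_not.1 fun ht => hb t ⟨t.2, ht⟩
  refine h ((hasSmallSubcover_iUnion hK.isRegular (hsmall b) hcovered).mono fun y hy => ?_)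
  exact mem_iUnion.2 ⟨⟨fun i => y i, fun i => hy i⟩, hy, fun i => rfl⟩

theorem kCompact_Iic (hseg : ∀ b : K, #(Iio b) < #K) (hwc : WComp K) (g : K → K) :
    KCompact K (Iic g) := by
  obtain ⟨hK, htp⟩ := hwc
  have : Nonempty K := mk_ne_zero_iff.1 hK.ne_zero
  have := noMaxOrder_of_mk_Iio_lt hseg hK.aleph0_lt.le
  intro 𝒰 hop hcov
  by_contra h
  obtain ⟨y, hy⟩ := htp _ (uncoveredNodes_isSubtree 𝒰 g) (uncoveredNodes_kTree hseg hK h)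
  have hyg : y ∈ Iic g := fun i =>
    let ⟨b, hib⟩ := exists_gt i
    (hy b).1 ⟨i, hib⟩
  obtain ⟨U, hU, hyU⟩ := hcov hyg
  obtain ⟨b, hb⟩ := exists_agree_below_subset_of_isOpen (hop U hU) hyU
  exact (hy b).2 ⟨{U}, singleton_subset_iff.2 hU, by simpa using one_lt_aleph0.trans hK.aleph0_lt,
    fun z hz => ⟨U, rfl, hb fun i hi => hz.2 ⟨i, hi⟩⟩⟩

end Box

section Characterizations

variable {K : Type u} [LinearOrder K]

theorem exists_kCompact_superset_iff_bddAbove (hseg : ∀ b : K, #(Iio b) < #K) (hwc : WComp K)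
    {A : Set (K → K)} : (∃ B, KCompact K B ∧ A ⊆ B) ↔ BddAbove A :=
  ⟨fun ⟨_, hB, hAB⟩ => BddAbove.mono hAB (bddAbove_of_kCompact hseg hwc.1.isRegular hB),
    fun ⟨x, hx⟩ => ⟨Iic x, kCompact_Iic hseg hwc x, fun _ hy => hx hy⟩⟩

theorem exists_isKK_superset_iff_evBddSet (hseg : ∀ b : K, #(Iio b) < #K) (hwc : WComp K)
    {A : Set (K → K)} : (∃ B, IsKK K B ∧ A ⊆ B) ↔ EvBddSet K A := by
  have hreg := hwc.1.isRegular
  constructor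
  · rintro ⟨_, ⟨C, hC, rfl⟩, hAC⟩
    choose xb hxb using fun b => bddAbove_of_kCompact hseg hreg (hC b)
    choose x hx using fun i => bddAbove_of_mk_lt hseg hreg
      (mk_range_le.trans_lt (mk_Iic_lt_of_mk_Iio_lt hseg hreg.aleph0_le i) :
        #(range fun b : Iic i => xb b i) < #K)
    refine ⟨x, fun y hy => ?_⟩
    obtain ⟨b, hyb⟩ := mem_iUnion.1 (hAC hy)
    exact ⟨b, fun i hbi => (hxb b hyb i).trans (hx i ⟨⟨b, hbi⟩, rfl⟩)⟩
  · rintro ⟨x, hx⟩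
    refine ⟨⋃ m, Iic fun i => max m (x i), ⟨_, fun m => kCompact_Iic hseg hwc _, rfl⟩,
      fun y hy => ?_⟩
    obtain ⟨b, hb⟩ := hx y hy
    obtain ⟨m, hm⟩ := bddAbove_of_mk_lt hseg hreg
      (mk_range_le.trans_lt (hseg b) : #(range fun i : Iio b => y i) < #K)
    refine mem_iUnion.2 ⟨m, fun i => ?_⟩
    rcases lt_or_ge i b with hib | hbi
    · exact le_max_of_le_left (hm ⟨⟨i, hib⟩, rfl⟩)
    · exact le_max_of_le_right (hb i hbi)

end Characterizations

theorem weaklyCompact_bounded_characterizations_general (K : Type u) [LinearOrder K]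
    (hseg : ∀ b : K, #(Set.Iio b) < #K)
    (hwc : WComp K) (A : Set (K → K)) :
    ((∃ B, KCompact K B ∧ A ⊆ B) ↔ BddSet K A) ∧
    ((∃ B, IsKK K B ∧ A ⊆ B) ↔ EvBddSet K A) :=
  ⟨exists_kCompact_superset_iff_bddAbove hseg hwc, exists_isKK_superset_iff_evBddSet hseg hwc⟩

/-- For weakly compact `K`: `A` is contained in a κ-compact set iff it is
bounded, and `A` is contained in a `K_κ` set iff it is eventually bounded. -/
theorem weaklyCompact_bounded_characterizations (K : Type u) [LinearOrder K]
    [WellFoundedLT K] (hseg : ∀ b : K, #(Set.Iio b) < #K)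
    (hwc : WComp K) (A : Set (K → K)) :
    ((∃ B, KCompact K B ∧ A ⊆ B) ↔ BddSet K A) ∧
    ((∃ B, IsKK K B ∧ A ⊆ B) ↔ EvBddSet K A) :=
  weaklyCompact_bounded_characterizations_general K hseg hwc A
end
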